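/- The block graph F of any directed graph G (bipartite graph on vertices of G and vertex-resilient blocks, with edges given by membership) is acyclic, i.e., a forest. -/

import Mathlib

variable {V : Type*}

/-- Mutual reachability (strong connectivity of a pair) in the digraph `E`. -/
def SConn (E : V → V → Prop) (u v : V) : Prop :=
  Relation.ReflTransGen E u v ∧ Relation.ReflTransGen E v u

/-- The digraph obtained from `E` by deleting vertex `w` (and incident edges). -/
def delV (E : V → V → Prop) (w : V) : V → V → Prop :=
  fun a b => E a b ∧ a ≠ w ∧ b ≠ w

/-- The digraph obtained from `E` by deleting the single edge `(a,b)`. -/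
def delE (E : V → V → Prop) (a b : V) : V → V → Prop :=
  fun x y => E x y ∧ ¬(x = a ∧ y = b)

/-- `u` and `v` are vertex-resilient: they are distinct and remain strongly
connected after deletion of any single other vertex. -/
def VRes (E : V → V → Prop) (u v : V) : Prop :=
  u ≠ v ∧ ∀ w, w ≠ u → w ≠ v → SConn (delV E w) u v

/-- A vertex-resilient block: a maximal set of size ≥ 2 of pairwise
vertex-resilient vertices. -/
def IsVRBlock (E : V → V → Prop) (B : Set V) : Prop :=
  B.Pairwise (VRes E) ∧ (∃ a ∈ B, ∃ b ∈ B, a ≠ b) ∧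
    ∀ B' : Set V, B ⊆ B' → B'.Pairwise (VRes E) → B' = B

/-- `l` is (the vertex list of) a directed path from `u` to `v` in `E`. -/
def IsPathList (E : V → V → Prop) (u v : V) (l : List V) : Prop :=
  l.Chain' E ∧ l.head? = some u ∧ l.getLast? = some v

/-- The internal vertices of a path given as a vertex list. -/
def internalsL (l : List V) : List V := (l.drop 1).dropLast

/-- The edges of a path given as a vertex list. -/
def edgesOfL (l : List V) : List (V × V) := l.zip l.tail

/-- There exist two internally vertex-disjoint (simple, distinct) paths from `u` to `v`. -/
def TwoVPaths (E : V → V → Prop) (u v : V) : Prop :=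
  ∃ l₁ l₂ : List V, IsPathList E u v l₁ ∧ IsPathList E u v l₂ ∧
    l₁.Nodup ∧ l₂.Nodup ∧ l₁ ≠ l₂ ∧ ∀ x ∈ internalsL l₁, x ∉ internalsL l₂

/-- `u` and `v` are 2-vertex-connected. -/
def TwoVConn (E : V → V → Prop) (u v : V) : Prop :=
  u ≠ v ∧ TwoVPaths E u v ∧ TwoVPaths E v u

/-- There exist two edge-disjoint paths from `u` to `v`. -/
def TwoEPaths (E : V → V → Prop) (u v : V) : Prop :=
  ∃ l₁ l₂ : List V, IsPathList E u v l₁ ∧ IsPathList E u v l₂ ∧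
    ∀ e ∈ edgesOfL l₁, e ∉ edgesOfL l₂

/-- `u` and `v` are 2-edge-connected. -/
def TwoEConn (E : V → V → Prop) (u v : V) : Prop :=
  u ≠ v ∧ TwoEPaths E u v ∧ TwoEPaths E v u

/-- A 2-vertex-connected block. -/
def Is2VBlock (E : V → V → Prop) (B : Set V) : Prop :=
  B.Pairwise (TwoVConn E) ∧ (∃ a ∈ B, ∃ b ∈ B, a ≠ b) ∧
    ∀ B' : Set V, B ⊆ B' → B'.Pairwise (TwoVConn E) → B' = B

/-- A 2-edge-connected block. -/
def Is2EBlock (E : V → V → Prop) (B : Set V) : Prop :=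
  B.Pairwise (TwoEConn E) ∧ (∃ a ∈ B, ∃ b ∈ B, a ≠ b) ∧
    ∀ B' : Set V, B ⊆ B' → B'.Pairwise (TwoEConn E) → B' = B

/-- The digraph `E` is strongly connected. -/
def StronglyConn (E : V → V → Prop) : Prop :=
  ∀ u v, Relation.ReflTransGen E u v

/-- `(a,b)` is a strong bridge of the strongly connected digraph `E`. -/
def IsStrongBridge (E : V → V → Prop) (a b : V) : Prop :=
  E a b ∧ ¬ StronglyConn (delE E a b)

/-- `u` dominates `w` in the flow graph with start vertex `s`:
every path from `s` to `w` contains `u`. -/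
def DomOf (E : V → V → Prop) (s u w : V) : Prop :=
  ∀ l : List V, IsPathList E s w l → u ∈ l

/-- `d` is the immediate dominator of `w` in the flow graph with start `s`:
the proper dominator of `w` dominated by all proper dominators of `w`. -/
def IdomOf (E : V → V → Prop) (s d w : V) : Prop :=
  d ≠ w ∧ DomOf E s d w ∧ ∀ u, u ≠ w → DomOf E s u w → DomOf E s u d

/-- The block graph `F` of the digraph `E`: the bipartite undirected graph on the
vertices of `E` together with its vertex-resilient blocks, a vertex `u` being
adjacent to a block node `B` exactly when `u ∈ B`. -/
def blockGraph (E : V → V → Prop) :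
    SimpleGraph (V ⊕ {B : Set V // IsVRBlock E B}) where
  Adj a b := ∃ u B, u ∈ B.1 ∧
    ((a = Sum.inl u ∧ b = Sum.inr B) ∨ (a = Sum.inr B ∧ b = Sum.inl u))
  symm := by
    constructor
    rintro a b ⟨u, B, hm, (⟨rfl, rfl⟩ | ⟨rfl, rfl⟩)⟩
    · exact ⟨u, B, hm, Or.inr ⟨rfl, rfl⟩⟩
    · exact ⟨u, B, hm, Or.inl ⟨rfl, rfl⟩⟩
  loopless := by
    constructor
    rintro a ⟨u, B, hm, (⟨rfl, h⟩ | ⟨rfl, h⟩)⟩ <;> simp at h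

/-!
Suppose the block graph has a cycle. Rotating it to start at a block `B`, it reads
`B – v – B₀ – ⋯ – B` with `v ∈ B ∩ B₀`, `B₀ ≠ B`, and the remaining path from `B₀` back to `B`
avoids `v`. Consecutive vertices on that path share a block, so they stay strongly connected
once `v` is deleted; hence some `y ∈ B₀` and `z ∈ B`, both different from `v`, are strongly
connected in `G \ v`. This makes every `x ∈ B₀` and `u ∈ B` vertex-resilient: a deleted vertex
`w ≠ v` is bypassed through `v`, and `v` itself is bypassed through `x ⇝ y ⇝ z ⇝ u`. So
`B ∪ B₀` is pairwise vertex-resilient and maximality forces `B = B₀`.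
-/

variable {E : V → V → Prop}

theorem SConn.refl (E : V → V → Prop) (u : V) : SConn E u u :=
  ⟨.refl, .refl⟩

theorem SConn.trans {u v w : V} (h₁ : SConn E u v) (h₂ : SConn E v w) : SConn E u w :=
  ⟨h₁.1.trans h₂.1, h₂.2.trans h₁.2⟩

theorem VRes.symm {u v : V} (h : VRes E u v) : VRes E v u :=
  ⟨h.1.symm, fun w hwv hwu => (h.2 w hwu hwv).symm⟩

theorem Set.Pairwise.sConn_delV {B : Set V} (hB : B.Pairwise (VRes E)) {x y w : V}
    (hx : x ∈ B) (hy : y ∈ B) (hwx : w ≠ x) (hwy : w ≠ y) : SConn (delV E w) x y := by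
  rcases eq_or_ne x y with rfl | hxy
  · exact SConn.refl _ x
  · exact (hB hx hy hxy).2 w hwx hwy

theorem IsVRBlock.exists_mem_ne {B : Set V} (hB : IsVRBlock E B) (v : V) : ∃ x ∈ B, x ≠ v := by
  obtain ⟨a, ha, b, hb, hab⟩ := hB.2.1
  by_cases hav : a = v
  · exact ⟨b, hb, hav ▸ hab.symm⟩
  · exact ⟨a, ha, hav⟩

theorem IsVRBlock.eq_of_pairwise_union {B C : Set V} (hB : IsVRBlock E B) (hC : IsVRBlock E C)
    (h : (B ∪ C).Pairwise (VRes E)) : B = C :=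
  hC.2.2 B ((hB.2.2 _ Set.subset_union_left h) ▸ Set.subset_union_right) hB.1

theorem IsVRBlock.eq_of_sConn_delV {B C : Set V} (hB : IsVRBlock E B) (hC : IsVRBlock E C)
    {v y z : V} (hvB : v ∈ B) (hvC : v ∈ C) (hyB : y ∈ B) (hzC : z ∈ C) (hyv : y ≠ v)
    (hzv : z ≠ v) (hyz : SConn (delV E v) y z) : B = C := by
  have hmixed : ∀ x ∈ B, ∀ u ∈ C, x ≠ u → VRes E x u := by
    intro x hx u hu hxu
    refine ⟨hxu, fun w hwx hwu => ?_⟩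
    by_cases hwv : w = v
    · subst hwv
      exact ((hB.1.sConn_delV hx hyB hwx hyv.symm).trans hyz).trans
        (hC.1.sConn_delV hzC hu hzv.symm hwu)
    · exact (hB.1.sConn_delV hx hvB hwx hwv).trans (hC.1.sConn_delV hvC hu hwv hwu)
  refine hB.eq_of_pairwise_union hC (Set.pairwise_union.2 ⟨hB.1, hC.1, ?_⟩)
  exact fun x hx u hu hxu => ⟨hmixed x hx u hu hxu, (hmixed x hx u hu hxu).symm⟩

namespace blockGraph

@[simp]
theorem adj_inl_inl (u v : V) : ¬(blockGraph E).Adj (.inl u) (.inl v) := by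
  rintro ⟨_, _, _, ⟨-, h⟩ | ⟨h, -⟩⟩ <;> cases h

@[simp]
theorem adj_inr_inr (B C : {B : Set V // IsVRBlock E B}) :
    ¬(blockGraph E).Adj (.inr B) (.inr C) := by
  rintro ⟨_, _, _, ⟨h, -⟩ | ⟨-, h⟩⟩ <;> cases h

@[simp]
theorem adj_inl_inr (u : V) (B : {B : Set V // IsVRBlock E B}) :
    (blockGraph E).Adj (.inl u) (.inr B) ↔ u ∈ B.1 := by
  refine ⟨?_, fun h => ⟨u, B, h, .inl ⟨rfl, rfl⟩⟩⟩
  rintro ⟨_, _, h, ⟨h₁, h₂⟩ | ⟨h₁, -⟩⟩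
  · cases h₁; cases h₂; exact h
  · cases h₁

@[simp]
theorem adj_inr_inl (B : {B : Set V // IsVRBlock E B}) (u : V) :
    (blockGraph E).Adj (.inr B) (.inl u) ↔ u ∈ B.1 := by
  rw [SimpleGraph.adj_comm, adj_inl_inr]

def MemNode (x : V) : V ⊕ {B : Set V // IsVRBlock E B} → Prop
  | .inl u => x = u
  | .inr B => x ∈ B.1

theorem exists_sConn_delV_of_walk {v : V} {s t : V ⊕ {B : Set V // IsVRBlock E B}}
    (p : (blockGraph E).Walk s t) (hp : .inl v ∉ p.support) {x : V} (hx : MemNode x s)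
    (hxv : x ≠ v) : ∃ z, MemNode z t ∧ z ≠ v ∧ SConn (delV E v) x z := by
  induction p generalizing x with
  | nil => exact ⟨x, hx, hxv, SConn.refl _ x⟩
  | @cons s m t h p ih =>
    simp only [SimpleGraph.Walk.support_cons, List.mem_cons, not_or] at hp
    obtain ⟨x', hx'm, hx'v, hxx'⟩ : ∃ x', MemNode x' m ∧ x' ≠ v ∧ SConn (delV E v) x x' := by
      rcases s with u | B <;> rcases m with u' | B' <;> simp only [adj_inl_inl, adj_inr_inr,
        adj_inl_inr, adj_inr_inl] at h
      · exact ⟨x, hx ▸ h, hxv, SConn.refl _ x⟩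
      · have hu'v : u' ≠ v := fun h => hp.2 (h ▸ p.start_mem_support)
        exact ⟨u', rfl, hu'v, B.2.1.sConn_delV hx h hxv.symm hu'v.symm⟩
    obtain ⟨z, hz, hzv, hx'z⟩ := ih hp.2 hx'm hx'v
    exact ⟨z, hz, hzv, hxx'.trans hx'z⟩

theorem exists_inr_mem_support {a : V ⊕ {B : Set V // IsVRBlock E B}}
    (p : (blockGraph E).Walk a a) (hp : ¬p.Nil) : ∃ B, .inr B ∈ p.support := by
  cases p with
  | nil => exact absurd .nil hp
  | @cons _ m _ h q =>
    rcases a with u | B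
    · rcases m with u' | B
      · simp at h
      · exact ⟨B, by simp⟩
    · exact ⟨B, by simp⟩

theorem not_isCycle_of_inr (B : {B : Set V // IsVRBlock E B})
    (c : (blockGraph E).Walk (.inr B) (.inr B)) : ¬c.IsCycle := by
  intro hc
  cases c with
  | nil => exact SimpleGraph.Walk.not_isCycle_nil hc
  | @cons _ m _ h₁ q₁ =>
    rcases m with v | _
    case inr => simp at h₁
    rw [SimpleGraph.Walk.cons_isCycle_iff] at hc
    obtain ⟨hq₁, hedge⟩ := hc
    cases q₁ with
    | @cons _ n _ h₂ q₂ =>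
      rcases n with _ | B₀
      case inl => simp at h₂
      rw [SimpleGraph.Walk.cons_isPath_iff] at hq₁
      obtain ⟨hq₂, hvq₂⟩ := hq₁
      have hB₀B : B₀ ≠ B := by
        rintro rfl
        rw [(SimpleGraph.Walk.isPath_iff_nil.1 hq₂).eq_nil] at hedge
        simp [Sym2.eq_swap] at hedge
      obtain ⟨x, hxB₀, hxv⟩ := B₀.2.exists_mem_ne v
      obtain ⟨z, hzB, hzv, hxz⟩ := exists_sConn_delV_of_walk q₂ hvq₂ hxB₀ hxv
      rw [adj_inr_inl] at h₁
      rw [adj_inl_inr] at h₂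
      exact hB₀B (Subtype.ext (B₀.2.eq_of_sConn_delV B.2 h₂ h₁ hxB₀ hzB hxv hzv hxz))

end blockGraph

theorem stmt3 (E : V → V → Prop) : (blockGraph E).IsAcyclic := by
  classical
  intro a c hc
  obtain ⟨B, hB⟩ := blockGraph.exists_inr_mem_support c hc.not_nil
  exact blockGraph.not_isCycle_of_inr B _ (hc.rotate hB)
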